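/- Convexity of s-fibers in Γ_log: for every β ∈ Γ_log, the sets {γ ∈ Γ_log : s(γ) = β and γ = δ + ψ(δ) for some δ > 0} and {γ ∈ Γ_log : s(γ) = β and γ = δ + ψ(δ) for some δ < 0} are convex subsets of Γ_log (i.e. closed under taking order-intermediate elements). -/
import Mathlib


noncomputable section

/-- Γ_log : the additive group of finitely supported functions ℕ → ℝ,
linearly ordered lexicographically. -/
abbrev GammaLog : Type := Lex (ℕ →₀ ℝ)

/-- χ_[0,n] : the characteristic function of {0,…,n}. -/
def chiI (n : ℕ) : GammaLog :=
  toLex (Finsupp.indicator (Finset.range (n + 1)) fun _ _ => (1 : ℝ))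

/-- For nonzero α, ψ(α) = χ_[0,n] where n is the least index with α(n) ≠ 0
(junk value when α = 0). -/
def psiL (α : GammaLog) : GammaLog := chiI (sInf {n : ℕ | ofLex α n ≠ 0})

/-- n(α) : the least index with α(n(α)) ≠ 1 (the defining set is nonempty by
finite support). -/
def nuOne (α : GammaLog) : ℕ := sInf {n : ℕ | ofLex α n ≠ 1}

/-- ∫α := α − χ_[0,n(α)]. -/
def intL (α : GammaLog) : GammaLog := α - chiI (nuOne α)

/-- s(α) := ψ(∫α). -/
def sL (α : GammaLog) : GammaLog := psiL (intL α)

/-- {γ : s(γ) = β, γ = δ + ψ(δ) for some δ > 0}. -/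
def posFiber (β : GammaLog) : Set GammaLog :=
  {γ | sL γ = β ∧ ∃ δ : GammaLog, 0 < δ ∧ γ = δ + psiL δ}

/-- {γ : s(γ) = β, γ = δ + ψ(δ) for some δ < 0}. -/
def negFiber (β : GammaLog) : Set GammaLog :=
  {γ | sL γ = β ∧ ∃ δ : GammaLog, δ < 0 ∧ γ = δ + psiL δ}

lemma lt_iff' {a b : GammaLog} :
    a < b ↔ ∃ j, (∀ d, d < j → ofLex a d = ofLex b d) ∧ ofLex a j < ofLex b j :=
  Finsupp.lex_def

lemma chiI_apply (n k : ℕ) : ofLex (chiI n) k = if k ≤ n then 1 else 0 := by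
  simp [chiI, Finsupp.indicator_apply, Nat.lt_succ_iff]

lemma ofLex_add' (a b : GammaLog) (k : ℕ) :
    ofLex (a + b) k = ofLex a k + ofLex b k := rfl

lemma ofLex_sub' (a b : GammaLog) (k : ℕ) :
    ofLex (a - b) k = ofLex a k - ofLex b k := rfl

lemma ofLex_zero' (k : ℕ) : ofLex (0 : GammaLog) k = 0 := rfl

lemma chiI_inj {m n : ℕ} (h : chiI m = chiI n) : m = n := by
  by_contra hne
  rcases Nat.lt_or_ge m n with hlt | hge
  · have h1 : ofLex (chiI m) n = ofLex (chiI n) n := by rw [h]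
    rw [chiI_apply, chiI_apply, if_neg (by omega), if_pos le_rfl] at h1
    exact zero_ne_one h1
  · have hlt : n < m := lt_of_le_of_ne hge (Ne.symm hne)
    have h1 : ofLex (chiI m) m = ofLex (chiI n) m := by rw [h]
    rw [chiI_apply, chiI_apply, if_pos le_rfl, if_neg (by omega)] at h1
    exact one_ne_zero h1

lemma sInf_eq_of {s : Set ℕ} {m : ℕ} (hm : m ∈ s) (h : ∀ k < m, k ∉ s) :
    sInf s = m :=
  le_antisymm (Nat.sInf_le hm)
    (le_csInf ⟨m, hm⟩ fun k hk => not_lt.1 fun hlt => h k hlt hk)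

/-- Characterization of the positive fiber. -/
lemma posFiber_iff {β γ : GammaLog} :
    γ ∈ posFiber β ↔ ∃ m, β = chiI m ∧ (∀ k < m, ofLex γ k = 1) ∧ 1 < ofLex γ m := by
  constructor
  · rintro ⟨hs, δ, hδ, rfl⟩
    obtain ⟨m, hlt, hm⟩ := lt_iff'.1 hδ
    have hδlt : ∀ k < m, ofLex δ k = 0 := fun k hk => (hlt k hk).symm
    rw [ofLex_zero'] at hm
    have hpsi : psiL δ = chiI m := by
      unfold psiL
      rw [sInf_eq_of (s := {n | ofLex δ n ≠ 0}) (m := m) hm.ne'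
        (fun k hk hne => hne (hδlt k hk))]
    have hγlt : ∀ k < m, ofLex (δ + psiL δ) k = 1 := by
      intro k hk
      rw [hpsi, ofLex_add', chiI_apply, hδlt k hk, if_pos hk.le, zero_add]
    have hγm : ofLex (δ + psiL δ) m = ofLex δ m + 1 := by
      rw [hpsi, ofLex_add', chiI_apply, if_pos le_rfl]
    have hnu : nuOne (δ + psiL δ) = m := by
      unfold nuOne
      exact sInf_eq_of (s := {n | ofLex (δ + psiL δ) n ≠ 1}) (m := m)
        (by simp only [Set.mem_setOf_eq, hγm]; intro h; nlinarith)
        (fun k hk hne => hne (hγlt k hk))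
    have hint : intL (δ + psiL δ) = δ := by
      rw [intL, hnu, ← hpsi, add_sub_cancel_right]
    have : sL (δ + psiL δ) = chiI m := by rw [sL, hint, hpsi]
    exact ⟨m, by rw [← hs, this], hγlt, by rw [hγm]; linarith⟩
  · rintro ⟨m, rfl, h1, hm⟩
    set δ : GammaLog := γ - chiI m with hδdef
    have hδlt : ∀ k < m, ofLex δ k = 0 := by
      intro k hk
      rw [hδdef, ofLex_sub', chiI_apply, h1 k hk, if_pos hk.le, sub_self]
    have hδm : ofLex δ m = ofLex γ m - 1 := by
      rw [hδdef, ofLex_sub', chiI_apply, if_pos le_rfl]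
    have hδpos : 0 < δ := by
      refine lt_iff'.2 ⟨m, fun d hd => ?_, ?_⟩
      · rw [ofLex_zero', hδlt d hd]
      · rw [ofLex_zero', hδm]; linarith
    have hpsi : psiL δ = chiI m := by
      unfold psiL
      rw [sInf_eq_of (s := {n | ofLex δ n ≠ 0}) (m := m)
        (by simp only [Set.mem_setOf_eq, hδm]; intro h; linarith)
        (fun k hk hne => hne (hδlt k hk))]
    have hγ : γ = δ + psiL δ := by rw [hpsi, hδdef, sub_add_cancel]
    have hnu : nuOne γ = m := by
      unfold nuOne
      exact sInf_eq_of (s := {n | ofLex γ n ≠ 1}) (m := m)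
        (by simp only [Set.mem_setOf_eq]; intro h; rw [h] at hm; exact lt_irrefl _ hm)
        (fun k hk hne => hne (h1 k hk))
    have : sL γ = chiI m := by
      rw [sL, intL, hnu, ← hδdef, hpsi]
    exact ⟨this, δ, hδpos, hγ⟩

/-- Characterization of the negative fiber. -/
lemma negFiber_iff {β γ : GammaLog} :
    γ ∈ negFiber β ↔ ∃ m, β = chiI m ∧ (∀ k < m, ofLex γ k = 1) ∧ ofLex γ m < 1 := by
  constructor
  · rintro ⟨hs, δ, hδ, rfl⟩
    obtain ⟨m, hlt, hm⟩ := lt_iff'.1 hδ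
    have hδlt : ∀ k < m, ofLex δ k = 0 := fun k hk => hlt k hk
    rw [ofLex_zero'] at hm
    have hpsi : psiL δ = chiI m := by
      unfold psiL
      rw [sInf_eq_of (s := {n | ofLex δ n ≠ 0}) (m := m) hm.ne
        (fun k hk hne => hne (hδlt k hk))]
    have hγlt : ∀ k < m, ofLex (δ + psiL δ) k = 1 := by
      intro k hk
      rw [hpsi, ofLex_add', chiI_apply, hδlt k hk, if_pos hk.le, zero_add]
    have hγm : ofLex (δ + psiL δ) m = ofLex δ m + 1 := by
      rw [hpsi, ofLex_add', chiI_apply, if_pos le_rfl]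
    have hnu : nuOne (δ + psiL δ) = m := by
      unfold nuOne
      exact sInf_eq_of (s := {n | ofLex (δ + psiL δ) n ≠ 1}) (m := m)
        (by simp only [Set.mem_setOf_eq, hγm]; intro h; nlinarith)
        (fun k hk hne => hne (hγlt k hk))
    have hint : intL (δ + psiL δ) = δ := by
      rw [intL, hnu, ← hpsi, add_sub_cancel_right]
    have : sL (δ + psiL δ) = chiI m := by rw [sL, hint, hpsi]
    exact ⟨m, by rw [← hs, this], hγlt, by rw [hγm]; linarith⟩
  · rintro ⟨m, rfl, h1, hm⟩
    set δ : GammaLog := γ - chiI m with hδdef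
    have hδlt : ∀ k < m, ofLex δ k = 0 := by
      intro k hk
      rw [hδdef, ofLex_sub', chiI_apply, h1 k hk, if_pos hk.le, sub_self]
    have hδm : ofLex δ m = ofLex γ m - 1 := by
      rw [hδdef, ofLex_sub', chiI_apply, if_pos le_rfl]
    have hδneg : δ < 0 := by
      refine lt_iff'.2 ⟨m, fun d hd => ?_, ?_⟩
      · rw [ofLex_zero', hδlt d hd]
      · rw [ofLex_zero', hδm]; linarith
    have hpsi : psiL δ = chiI m := by
      unfold psiL
      rw [sInf_eq_of (s := {n | ofLex δ n ≠ 0}) (m := m)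
        (by simp only [Set.mem_setOf_eq, hδm]; intro h; linarith)
        (fun k hk hne => hne (hδlt k hk))]
    have hγ : γ = δ + psiL δ := by rw [hpsi, hδdef, sub_add_cancel]
    have hnu : nuOne γ = m := by
      unfold nuOne
      exact sInf_eq_of (s := {n | ofLex γ n ≠ 1}) (m := m)
        (by simp only [Set.mem_setOf_eq]; intro h; rw [h] at hm; exact lt_irrefl _ hm)
        (fun k hk hne => hne (h1 k hk))
    have : sL γ = chiI m := by
      rw [sL, intL, hnu, ← hδdef, hpsi]
    exact ⟨this, δ, hδneg, hγ⟩

/-- Squeeze: intermediate elements agree with the endpoints below `m`. -/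
lemma squeeze_head {a b x : GammaLog} {m : ℕ}
    (ha : ∀ k < m, ofLex a k = 1) (hb : ∀ k < m, ofLex b k = 1)
    (hax : a ≤ x) (hxb : x ≤ b) : ∀ k < m, ofLex x k = 1 := by
  intro k hk
  induction k using Nat.strong_induction_on with
  | _ k ih =>
    by_contra hne
    rcases lt_or_gt_of_ne hne with hlt | hgt
    · have : x < a := lt_iff'.2 ⟨k,
        fun d hd => (ih d hd (hd.trans hk)).trans (ha d (hd.trans hk)).symm,
        by rw [ha k hk]; exact hlt⟩
      exact absurd hax (not_le.2 this)
    · have : b < x := lt_iff'.2 ⟨k,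
        fun d hd => (hb d (hd.trans hk)).trans (ih d hd (hd.trans hk)).symm,
        by rw [hb k hk]; exact hgt⟩
      exact absurd hxb (not_le.2 this)

/-- Convexity of the s-fibers intersected with (Γ^{>})′ and (Γ^{<})′. -/
theorem s_fibers_convex (β : GammaLog) :
    (∀ a b x : GammaLog, a ∈ posFiber β → b ∈ posFiber β →
      a ≤ x → x ≤ b → x ∈ posFiber β) ∧
    (∀ a b x : GammaLog, a ∈ negFiber β → b ∈ negFiber β →
      a ≤ x → x ≤ b → x ∈ negFiber β) := by
  constructor
  · intro a b x ha hb hax hxb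
    obtain ⟨m, hβ, ha1, ham⟩ := posFiber_iff.1 ha
    obtain ⟨m', hβ', hb1, hbm⟩ := posFiber_iff.1 hb
    obtain rfl : m = m' := chiI_inj (hβ ▸ hβ')
    have hx1 := squeeze_head ha1 hb1 hax hxb
    refine posFiber_iff.2 ⟨m, hβ, hx1, ?_⟩
    by_contra hle
    have hxa : x < a := lt_iff'.2 ⟨m,
      fun d hd => (hx1 d hd).trans (ha1 d hd).symm, by linarith [not_lt.1 hle]⟩
    exact absurd hax (not_le.2 hxa)
  · intro a b x ha hb hax hxb
    obtain ⟨m, hβ, ha1, ham⟩ := negFiber_iff.1 ha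
    obtain ⟨m', hβ', hb1, hbm⟩ := negFiber_iff.1 hb
    obtain rfl : m = m' := chiI_inj (hβ ▸ hβ')
    have hx1 := squeeze_head ha1 hb1 hax hxb
    refine negFiber_iff.2 ⟨m, hβ, hx1, ?_⟩
    by_contra hle
    have hbx : b < x := lt_iff'.2 ⟨m,
      fun d hd => (hb1 d hd).trans (hx1 d hd).symm, by linarith [not_lt.1 hle]⟩
    exact absurd hxb (not_le.2 hbx)
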